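/- Let b and d be integers with −2d < b < 2d, let τ ∈ ℂ with Im τ > 0, and let u, v ∈ ℂ. Then: (i) A_{d,b}(u,v|4τ) − C_{d,b}(u,v|4τ) = θ₄(u|(2d+b)τ)·θ₄(v|(2d−b)τ); and (ii) A_{d,b}(u,v|τ)² − C_{d,b}(u,v|τ)² = A_{d,b}(u,v+π/2|τ)² − C_{d,b}(u,v+π/2|τ)². -/

import Mathlib

open Complex

/-- The Jacobi theta function θ₄(z|τ). -/
noncomputable def theta4 (z τ : ℂ) : ℂ :=
  ∑' n : ℤ, (-1 : ℂ) ^ n * Complex.exp (Real.pi * Complex.I * τ * (n : ℂ) ^ 2) *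
    Complex.exp (2 * (n : ℂ) * Complex.I * z)

/-- The theta series `A_{d,b}(u,v|τ)`. -/
noncomputable def Adb (d b : ℤ) (u v τ : ℂ) : ℂ :=
  ∑' m : ℤ, ∑' n : ℤ,
    Complex.exp (Real.pi * Complex.I * τ *
      ((d : ℂ) * (m : ℂ) ^ 2 + (b : ℂ) * (m : ℂ) * (n : ℂ) + (d : ℂ) * (n : ℂ) ^ 2)) *
    Complex.exp (2 * Complex.I * u * ((m : ℂ) + (n : ℂ))) *
    Complex.exp (2 * Complex.I * v * ((m : ℂ) - (n : ℂ)))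

/-- The theta series `C_{d,b}(u,v|τ)`. -/
noncomputable def Cdb (d b : ℤ) (u v τ : ℂ) : ℂ :=
  ∑' m : ℤ, ∑' n : ℤ,
    Complex.exp (Real.pi * Complex.I * τ *
      ((d : ℂ) * (m : ℂ) ^ 2 + (b : ℂ) * (m : ℂ) * (n : ℂ) + (d : ℂ) * (n : ℂ) ^ 2
        + ((d : ℂ) + (b : ℂ) / 2) * (m : ℂ) + ((d : ℂ) + (b : ℂ) / 2) * (n : ℂ)
        + (d : ℂ) / 2 + (b : ℂ) / 4)) *
    Complex.exp (2 * Complex.I * u * ((m : ℂ) + (n : ℂ) + 1)) *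
    Complex.exp (2 * Complex.I * v * ((m : ℂ) - (n : ℂ)))

/-!
Writing θ₃(z|σ) = `jacobiTheta₂ (z / π) σ`, the substitution `(s, t) = (m + n, m - n)` turns
`4 (d m² + b m n + d n²)` into `(2d + b) s² + (2d - b) t²`, and `(s, t) = (m + n + 1, m - n)` does
the same for the shifted quadratic form in `C`; together the two substitutions hit every pair
`(s, t)` exactly once, according to the parity of `s + t`. Hence
`A(4τ) + C(4τ) = θ₃(u|(2d+b)τ) θ₃(v|(2d-b)τ)`. Shifting both `u` and `v` by `π/2` fixes `A`,
negates `C` and turns θ₃ into θ₄, which gives (i). For (ii) write `τ = 4σ`: then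
`A² - C² = (A + C)(A - C) = θ₃θ₄(u) · θ₃θ₄(v)`, and `v ↦ v + π/2` merely swaps `θ₃(v)` and `θ₄(v)`.
-/

open Real

noncomputable def intProdParityEquiv : (ℤ × ℤ) ⊕ (ℤ × ℤ) ≃ ℤ × ℤ :=
  Equiv.ofBijective
    (Sum.elim (fun p => (p.1 + p.2, p.1 - p.2)) (fun p => (p.1 + p.2 + 1, p.1 - p.2))) <| by
    constructor
    · rintro (⟨m, n⟩ | ⟨m, n⟩) (⟨m', n'⟩ | ⟨m', n'⟩) h <;>
        simp only [Sum.elim_inl, Sum.elim_inr, Prod.mk.injEq, Sum.inl.injEq,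
          Sum.inr.injEq, reduceCtorEq] at h ⊢ <;> omega
    · rintro ⟨s, t⟩
      rcases Int.even_or_odd (s + t) with ⟨k, hk⟩ | ⟨k, hk⟩
      · exact ⟨.inl ((s + t) / 2, (s - t) / 2), by simp only [Sum.elim_inl, Prod.mk.injEq]; omega⟩
      · exact ⟨.inr ((s + t - 1) / 2, (s - t - 1) / 2), by
          simp only [Sum.elim_inr, Prod.mk.injEq]; omega⟩

@[simp]
theorem intProdParityEquiv_inl (p : ℤ × ℤ) :
    intProdParityEquiv (.inl p) = (p.1 + p.2, p.1 - p.2) :=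
  rfl

@[simp]
theorem intProdParityEquiv_inr (p : ℤ × ℤ) :
    intProdParityEquiv (.inr p) = (p.1 + p.2 + 1, p.1 - p.2) :=
  rfl

theorem Summable.tsum_eq_tsum_add_tsum_parity {α : Type*} [AddCommGroup α] [UniformSpace α]
    [IsUniformAddGroup α] [CompleteSpace α] [T2Space α] {f : ℤ × ℤ → α} (hf : Summable f) :
    ∑' p, f p = ∑' m, ∑' n, f (m + n, m - n) + ∑' m, ∑' n, f (m + n + 1, m - n) := by
  have he : Summable fun c => f (intProdParityEquiv c) := intProdParityEquiv.summable_iff.mpr hf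
  have heven := he.comp_injective Sum.inl_injective
  have hodd := he.comp_injective Sum.inr_injective
  rw [← intProdParityEquiv.tsum_eq, Summable.tsum_sum heven hodd]
  simp only [Function.comp_def, intProdParityEquiv_inl, intProdParityEquiv_inr] at heven hodd ⊢
  rw [heven.tsum_prod' heven.prod_factor, hodd.tsum_prod' hodd.prod_factor]

theorem theta4_eq_jacobiTheta₂ (z σ : ℂ) : theta4 z σ = jacobiTheta₂ (z / π + 1 / 2) σ := by
  refine tsum_congr fun n => ?_
  have hπ : (π : ℂ) ≠ 0 := ofReal_ne_zero.mpr Real.pi_ne_zero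
  rw [jacobiTheta₂_term, show 2 * π * I * n * (z / π + 1 / 2) + π * I * n ^ 2 * σ
      = n * (π * I) + (π * I * σ * n ^ 2 + 2 * n * I * z) by field_simp; ring,
    Complex.exp_add, Complex.exp_add, exp_int_mul, exp_pi_mul_I, mul_assoc]

theorem Adb_add_pi_div_two (d b : ℤ) (u v τ : ℂ) :
    Adb d b (u + π / 2) (v + π / 2) τ = Adb d b u v τ := by
  refine tsum_congr fun m => tsum_congr fun n => ?_
  simp only [← Complex.exp_add]
  exact exp_eq_exp_iff_exists_int.mpr ⟨m, by ring⟩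

theorem Cdb_add_pi_div_two (d b : ℤ) (u v τ : ℂ) :
    Cdb d b (u + π / 2) (v + π / 2) τ = -Cdb d b u v τ := by
  rw [Cdb, Cdb, ← tsum_neg]
  refine tsum_congr fun m => ?_
  rw [← tsum_neg]
  refine tsum_congr fun n => ?_
  rw [neg_eq_neg_one_mul, ← exp_pi_mul_I]
  simp only [← Complex.exp_add]
  exact exp_eq_exp_iff_exists_int.mpr ⟨m, by ring⟩

theorem Adb_add_Cdb (d b : ℤ) (h₁ : 0 < 2 * d + b) (h₂ : 0 < 2 * d - b) {τ : ℂ} (hτ : 0 < τ.im)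
    (u v : ℂ) :
    Adb d b u v (4 * τ) + Cdb d b u v (4 * τ)
      = jacobiTheta₂ (u / π) ((2 * d + b : ℤ) * τ)
        * jacobiTheta₂ (v / π) ((2 * d - b : ℤ) * τ) := by
  have summable_norm_term {k : ℤ} (hk : 0 < k) (z : ℂ) :
      Summable fun n => ‖jacobiTheta₂_term n z (k * τ)‖ := by
    refine summable_norm_iff.mpr ((summable_jacobiTheta₂_term_iff _ _).mpr ?_)
    simpa using mul_pos (Int.cast_pos.mpr hk : (0 : ℝ) < k) hτ
  have hπ : (π : ℂ) ≠ 0 := ofReal_ne_zero.mpr Real.pi_ne_zero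
  rw [jacobiTheta₂, jacobiTheta₂, tsum_mul_tsum_of_summable_norm (summable_norm_term h₁ _)
      (summable_norm_term h₂ _),
    (summable_mul_of_summable_norm (summable_norm_term h₁ _)
      (summable_norm_term h₂ _)).tsum_eq_tsum_add_tsum_parity, Adb, Cdb]
  congr 1 <;> refine tsum_congr fun m => tsum_congr fun n => ?_ <;>
    simp only [jacobiTheta₂_term, ← Complex.exp_add] <;> congr 1 <;>
    field_simp <;> push_cast <;> ring

theorem add_pi_div_two_div_pi (z : ℂ) : (z + π / 2) / π = z / π + 1 / 2 := by
  field_simp [ofReal_ne_zero.mpr Real.pi_ne_zero]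

theorem Adb_sub_Cdb (d b : ℤ) (h₁ : 0 < 2 * d + b) (h₂ : 0 < 2 * d - b) {τ : ℂ} (hτ : 0 < τ.im)
    (u v : ℂ) :
    Adb d b u v (4 * τ) - Cdb d b u v (4 * τ)
      = theta4 u ((2 * d + b : ℤ) * τ) * theta4 v ((2 * d - b : ℤ) * τ) := by
  rw [sub_eq_add_neg, ← Adb_add_pi_div_two, ← Cdb_add_pi_div_two, Adb_add_Cdb d b h₁ h₂ hτ,
    theta4_eq_jacobiTheta₂, theta4_eq_jacobiTheta₂, add_pi_div_two_div_pi, add_pi_div_two_div_pi]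

theorem Adb_sq_sub_Cdb_sq (d b : ℤ) (h₁ : 0 < 2 * d + b) (h₂ : 0 < 2 * d - b) {τ : ℂ}
    (hτ : 0 < τ.im) (u v : ℂ) :
    Adb d b u v (4 * τ) ^ 2 - Cdb d b u v (4 * τ) ^ 2
      = jacobiTheta₂ (u / π) ((2 * d + b : ℤ) * τ)
          * jacobiTheta₂ (u / π + 1 / 2) ((2 * d + b : ℤ) * τ)
        * (jacobiTheta₂ (v / π) ((2 * d - b : ℤ) * τ)
          * jacobiTheta₂ (v / π + 1 / 2) ((2 * d - b : ℤ) * τ)) := by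
  rw [sq_sub_sq, Adb_add_Cdb d b h₁ h₂ hτ, Adb_sub_Cdb d b h₁ h₂ hτ, theta4_eq_jacobiTheta₂,
    theta4_eq_jacobiTheta₂]
  ring

/-- Theorem on `A_{d,b}` and `C_{d,b}`: the difference factors as a product of two θ₄'s,
and the difference of squares is invariant under `v ↦ v + π/2`. -/
theorem Adb_Cdb_identities (d b : ℤ) (hb1 : -(2 * d) < b) (hb2 : b < 2 * d)
    (τ : ℂ) (hτ : 0 < τ.im) (u v : ℂ) :
    (Adb d b u v (4 * τ) - Cdb d b u v (4 * τ)
        = theta4 u (((2 * d + b : ℤ) : ℂ) * τ) * theta4 v (((2 * d - b : ℤ) : ℂ) * τ))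
    ∧ (Adb d b u v τ ^ 2 - Cdb d b u v τ ^ 2
        = Adb d b u (v + (Real.pi : ℂ) / 2) τ ^ 2 - Cdb d b u (v + (Real.pi : ℂ) / 2) τ ^ 2) := by
  have h₁ : 0 < 2 * d + b := by omega
  have h₂ : 0 < 2 * d - b := by omega
  refine ⟨Adb_sub_Cdb d b h₁ h₂ hτ u v, ?_⟩
  obtain ⟨σ, rfl, hσ⟩ : ∃ σ : ℂ, τ = 4 * σ ∧ 0 < σ.im := ⟨τ / 4, by ring, by simpa using hτ⟩
  rw [Adb_sq_sub_Cdb_sq d b h₁ h₂ hσ, Adb_sq_sub_Cdb_sq d b h₁ h₂ hσ, add_pi_div_two_div_pi,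
    add_assoc, add_halves, jacobiTheta₂_add_left]
  ring
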